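/- arXiv:1311.0658 — 4 statements merged into one kernel-verified Lean document; each statement's English description precedes it below -/
import Mathlib

section
/- Let α be irrational, V ∈ SL(2,ℝ) a constant matrix, k a nonzero integer, and D a nonzero 2×2 complex matrix satisfying D e^{πikα} = V D V^{-1}. Then V is conjugate (in SL(2,ℂ)) to the rotation R_θ = [[cos 2πθ, −sin 2πθ],[sin 2πθ, cos 2πθ]] for some θ with 2θ = ±kα/2 + ℓ for some integer ℓ. -/
/-!
Put `L = e^{πikα}`, so that `V D = L D V` with `L ≠ 1`. Iterating gives `V² D = L² D V²`, and
Cayley–Hamilton (`V² = (tr V) V - 1`) reduces this to `(1 + L)² = L (tr V)²`, i.e.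
`tr V = ±2 cos(πkα/2)`. Because `kα/2 ∉ ℤ` the eigenvalues `±e^{±iπkα/2}` are distinct, so `V` is
diagonalizable over `ℂ` and hence conjugate to any matrix with the same trace and determinant, in
particular to the rotation by `2πθ` with `θ = kα/4` (or `θ = kα/4 + 1/2` for the minus sign).
-/

open Matrix Polynomial

namespace Matrix

variable {n K : Type*} [Fintype n] [DecidableEq n] [Field K]

theorem mul_self_eq_trace_smul_sub_det_smul {R : Type*} [CommRing R] [Nontrivial R]
    (A : Matrix (Fin 2) (Fin 2) R) : A * A = A.trace • A - A.det • 1 := by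
  have h := aeval_self_charpoly A
  rw [charpoly_fin_two] at h
  simp only [map_add, map_sub, map_mul, aeval_X, aeval_C,
    Algebra.algebraMap_eq_smul_one, smul_mul_assoc, one_mul, sq] at h
  linear_combination (norm := module) h

theorem exists_isUnit_det_mul_eq_mul_diagonal (A : Matrix n n K) {μ : n → K}
    (hμ : Function.Injective μ) (hroot : ∀ i, A.charpoly.IsRoot (μ i)) :
    ∃ M : Matrix n n K, IsUnit M.det ∧ A * M = M * diagonal μ := by
  have hev : ∀ i, ∃ v, Module.End.HasEigenvector (toLin' A) (μ i) v := fun i =>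
    ((Module.End.hasEigenvalue_iff_isRoot_charpoly _ _).2
      (by rw [charpoly_toLin']; exact hroot i)).exists_hasEigenvector
  choose v hv using hev
  refine ⟨of fun i j => v j i, ?_, ?_⟩
  · rw [← isUnit_iff_isUnit_det, ← linearIndependent_cols_iff_isUnit]
    exact Module.End.eigenvectors_linearIndependent' _ μ hμ v hv
  · ext i j
    have h := congrFun (Module.End.mem_eigenspace_iff.1 (hv j).1) i
    rw [mul_diagonal]
    simpa [mul_comm, mul_apply, mulVec, dotProduct] using h

theorem exists_conj_of_isRoot_charpoly {A B : Matrix n n K} {μ : n → K}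
    (hμ : Function.Injective μ) (hA : ∀ i, A.charpoly.IsRoot (μ i))
    (hB : ∀ i, B.charpoly.IsRoot (μ i)) :
    ∃ U : Matrix n n K, IsUnit U.det ∧ A = U * B * U⁻¹ := by
  obtain ⟨M, hM, hAM⟩ := A.exists_isUnit_det_mul_eq_mul_diagonal hμ hA
  obtain ⟨P, hP, hBP⟩ := B.exists_isUnit_det_mul_eq_mul_diagonal hμ hB
  refine ⟨M * P⁻¹, by rw [det_mul]; exact hM.mul (isUnit_nonsing_inv_det _ hP), ?_⟩
  have hA' : A = M * diagonal μ * M⁻¹ := by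
    rw [← hAM, mul_nonsing_inv_cancel_right _ _ hM]
  have hB' : B = P * diagonal μ * P⁻¹ := by
    rw [← hBP, mul_nonsing_inv_cancel_right _ _ hP]
  rw [hA', hB', mul_inv_rev, nonsing_inv_nonsing_inv _ hP]
  simp only [mul_assoc, nonsing_inv_mul_cancel_left _ _ hP]

theorem one_add_sq_eq_mul_trace_sq {A D : Matrix (Fin 2) (Fin 2) K} {L : K} (hA : A.det = 1)
    (hD : D ≠ 0) (hL : L ≠ 1) (h : A * D = L • (D * A)) :
    (1 + L) ^ 2 = L * A.trace ^ 2 := by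
  set t := A.trace
  have hCH : A * A = t • A - 1 := by simpa [hA] using A.mul_self_eq_trace_smul_sub_det_smul
  have hsq : A * A * D = (L * L) • (D * (A * A)) := by
    rw [mul_assoc, h, mul_smul_comm, ← mul_assoc, h, smul_mul_assoc, smul_smul, mul_assoc]
  rw [hCH, sub_mul, smul_mul_assoc, one_mul, h, mul_sub, mul_smul_comm, mul_one] at hsq
  have hD' : (1 + L) • D = (L * t) • (D * A) := by
    have : (L - 1) • ((1 + L) • D - (L * t) • (D * A)) = 0 := by
      linear_combination (norm := module) hsq
    exact sub_eq_zero.1 ((smul_eq_zero.1 this).resolve_left (sub_ne_zero.2 hL))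
  have hDA : ((1 + L) ^ 2 - L * t ^ 2) • (D * A) = 0 := by
    have h2 := congrArg (· * A) hD'
    simp only [smul_mul_assoc, mul_assoc, hCH, mul_sub, mul_smul_comm, mul_one] at h2
    linear_combination (norm := module) (1 + L) • h2 - (L * t) • hD'
  have hDA0 : D * A ≠ 0 := fun h0 => hD <| by
    rw [← mul_nonsing_inv_cancel_right (A := A) D (by simp [hA]), h0, zero_mul]
  exact sub_eq_zero.1 ((smul_eq_zero.1 hDA).resolve_right hDA0)

theorem exists_conj_of_trace_eq_of_det_eq {A B : Matrix (Fin 2) (Fin 2) K} {μ ν : K}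
    (hμν : μ ≠ ν) (hAt : A.trace = μ + ν) (hAd : A.det = μ * ν) (hBt : B.trace = μ + ν)
    (hBd : B.det = μ * ν) :
    ∃ U : Matrix (Fin 2) (Fin 2) K, IsUnit U.det ∧ A = U * B * U⁻¹ := by
  have hroot (C : Matrix (Fin 2) (Fin 2) K) (ht : C.trace = μ + ν) (hd : C.det = μ * ν)
      (i : Fin 2) : C.charpoly.IsRoot (![μ, ν] i) := by
    fin_cases i <;> simp [charpoly_fin_two, ht, hd] <;> ring
  have hinj : Function.Injective ![μ, ν] := by
    intro i j
    fin_cases i <;> fin_cases j <;> simp [hμν, hμν.symm]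
  exact exists_conj_of_isRoot_charpoly hinj (hroot A hAt hAd) (hroot B hBt hBd)

end Matrix

open Complex
open scoped Real

theorem Complex.exp_mul_I_ne_exp_neg_mul_I {z : ℂ} (h : sin z ≠ 0) :
    exp (z * I) ≠ exp (-z * I) := by
  intro he
  apply h
  have h2 := two_sin z
  rw [he, sub_self, zero_mul] at h2
  exact (mul_eq_zero.1 h2).resolve_left two_ne_zero

theorem Irrational.sin_pi_mul_ne_zero {q : ℝ} (hq : Irrational q) : Real.sin (π * q) ≠ 0 := by
  rw [Ne, Real.sin_eq_zero_iff]
  rintro ⟨n, hn⟩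
  exact hq.ne_int n (mul_left_cancel₀ Real.pi_ne_zero (by linarith))

theorem exists_conj_rotation_of_trace_eq_two_cos {W : Matrix (Fin 2) (Fin 2) ℂ} {y : ℝ}
    (hdet : W.det = 1) (htr : W.trace = 2 * Real.cos y) (hsin : Real.sin y ≠ 0) :
    ∃ U : Matrix (Fin 2) (Fin 2) ℂ, IsUnit U.det ∧
      W = U * (!![Real.cos y, -Real.sin y; Real.sin y, Real.cos y].map ofReal) * U⁻¹ := by
  have hcos : (2 * Real.cos y : ℂ) = exp (y * I) + exp (-y * I) := by rw [ofReal_cos, two_cos]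
  have hμν : exp (y * I) * exp (-y * I) = 1 := by
    rw [← exp_add, neg_mul, add_neg_cancel, exp_zero]
  refine exists_conj_of_trace_eq_of_det_eq
    (exp_mul_I_ne_exp_neg_mul_I (by rwa [← ofReal_sin, ofReal_ne_zero])) (hcos ▸ htr)
    (hdet.trans hμν.symm) ?_ ?_
  · rw [← hcos, trace_fin_two]
    simp only [map_apply, of_apply, cons_val', cons_val_zero, cons_val_one, empty_val',
      cons_val_fin_one]
    ring
  · rw [hμν, det_fin_two]
    simp only [map_apply, of_apply, cons_val', cons_val_zero, cons_val_one, empty_val',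
      cons_val_fin_one]
    push_cast
    linear_combination Complex.cos_sq_add_sin_sq (y : ℂ)

theorem trace_eq_two_cos_or_neg {W D : Matrix (Fin 2) (Fin 2) ℂ} {y : ℝ} (hW : W.det = 1)
    (hD : D ≠ 0) (hsin : Real.sin y ≠ 0) (h : W * D = exp (2 * y * I) • (D * W)) :
    W.trace = 2 * Real.cos y ∨ W.trace = -(2 * Real.cos y) := by
  set μ := exp (y * I)
  set ν := exp (-y * I)
  have hμν : μ * ν = 1 := by rw [← exp_add, neg_mul, add_neg_cancel, exp_zero]
  have hne : μ ≠ ν := exp_mul_I_ne_exp_neg_mul_I (by rwa [← ofReal_sin, ofReal_ne_zero])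
  have hL : exp (2 * y * I) = μ ^ 2 := by rw [sq, ← exp_add]; ring_nf
  have hL1 : μ ^ 2 ≠ 1 := fun h1 =>
    hne (mul_left_cancel₀ (exp_ne_zero (y * I)) (by rw [← sq, h1, hμν]))
  rw [hL] at h
  have key := one_add_sq_eq_mul_trace_sq hW hD hL1 h
  rw [ofReal_cos, two_cos, ← sq_eq_sq_iff_eq_or_eq_neg]
  refine mul_left_cancel₀ (pow_ne_zero 2 (exp_ne_zero (y * I))) ?_
  linear_combination -key - (1 + 2 * μ ^ 2 + μ * ν) * hμν

/-- if D ≠ 0 satisfies D e^{πikα} = V D V⁻¹ with V ∈ SL(2,ℝ), k ≠ 0 and α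
    irrational, then V is conjugate over ℂ to a rotation R_θ with 2θ = ±kα/2 + ℓ. -/
theorem stmt7 (α : ℝ) (hα : Irrational α) (V : Matrix (Fin 2) (Fin 2) ℝ) (hV : V.det = 1)
    (k : ℤ) (hk : k ≠ 0) (D : Matrix (Fin 2) (Fin 2) ℂ) (hD : D ≠ 0)
    (heq : Complex.exp (Real.pi * Complex.I * (k : ℂ) * (α : ℂ)) • D
      = (V.map (Complex.ofReal)) * D * (V.map (Complex.ofReal))⁻¹) :
    ∃ U : Matrix (Fin 2) (Fin 2) ℂ, IsUnit U.det ∧ ∃ (θ : ℝ) (ℓ : ℤ),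
      (2 * θ = (k : ℝ) * α / 2 + ℓ ∨ 2 * θ = -((k : ℝ) * α / 2) + ℓ) ∧
      V.map (Complex.ofReal) =
        U * ((!![Real.cos (2 * Real.pi * θ), -Real.sin (2 * Real.pi * θ);
                 Real.sin (2 * Real.pi * θ),  Real.cos (2 * Real.pi * θ)]).map Complex.ofReal)
          * U⁻¹ := by
  set W := V.map ofReal
  have hW : W.det = 1 := by
    have h := ofRealHom.map_det V
    rw [hV, map_one] at h
    exact h.symm
  have hsin : Real.sin (2 * π * (k * α / 4)) ≠ 0 := by
    convert ((hα.intCast_mul hk).div_natCast two_ne_zero).sin_pi_mul_ne_zero using 2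
    push_cast
    ring
  have hcomm : W * D = exp (2 * (2 * π * (k * α / 4) : ℝ) * I) • (D * W) := by
    rw [show (2 * (2 * π * (k * α / 4) : ℝ) * I : ℂ) = π * I * k * α by push_cast; ring,
      ← smul_mul_assoc, heq, nonsing_inv_mul_cancel_right _ _ (by simp [hW])]
  rcases trace_eq_two_cos_or_neg hW hD hsin hcomm with htr | htr
  · obtain ⟨U, hU, hconj⟩ := exists_conj_rotation_of_trace_eq_two_cos hW htr hsin
    exact ⟨U, hU, k * α / 4, 0, Or.inl (by push_cast; ring), hconj⟩
  · have hshift : 2 * π * (k * α / 4 + 1 / 2) = 2 * π * (k * α / 4) + π := by ring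
    obtain ⟨U, hU, hconj⟩ :=
      exists_conj_rotation_of_trace_eq_two_cos (y := 2 * π * (k * α / 4 + 1 / 2)) hW
      (by rw [hshift, Real.cos_add_pi, htr]; push_cast; ring)
      (by rwa [hshift, Real.sin_add_pi, neg_ne_zero])
    exact ⟨U, hU, k * α / 4 + 1 / 2, 1, Or.inl (by push_cast; ring), hconj⟩
end

section
/- Let α be irrational, A : ℝ/ℤ → SL(2,ℝ) analytic in |Im x| < η, and suppose there exists B : ℝ/2ℤ → SL(2,ℝ) analytic in |Im x| < η with B(x+α)^{-1}A(x)B(x) constant. Then there exists B′ : ℝ/ℤ → PSL(2,ℝ) (i.e., B′(x+1) = ±B′(x)), analytic in |Im x| < η, such that B′(x+α)^{-1}A(x)B′(x) is constant. -/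
/-!
Since `A` is 1-periodic, `x ↦ B (x + 1)` conjugates `A` to the same constant `V` as `B`, and by
linearity so does `X z = B z + ε B (z + 1)`; for `ε = ±1` the 2-periodicity of `B` gives
`X (z + 1) = ε X z`. On the real line `det X` is invariant under `x ↦ x + α` (because
`det A = det V ≠ 0`) and under `x ↦ x + 2`, hence constant as `α` is irrational, hence constant on
the strip by analytic continuation. For 2 × 2 matrices
`det (B 0 + B 1) + det (B 0 - B 1) = 2 (det B 0 + det B 1) = 4`, so for one sign this constant is a
positive real, and `B'` is `X` divided by its square root.
-/

open Matrix Filter Function Set Topology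

theorem Function.Periodic.eq_const_of_irrational_div {X : Type*} [TopologicalSpace X] [T2Space X]
    {f : ℝ → X} {a b : ℝ} (ha : Periodic f a) (hb : Periodic f b) (hab : Irrational (a / b))
    (hf : Continuous f) : f = const ℝ (f 0) := by
  have hper : ∀ p ∈ AddSubgroup.closure {a, b}, Periodic f p := fun p hp => by
    induction hp using AddSubgroup.closure_induction with
    | mem p hp => rcases hp with rfl | rfl <;> assumption
    | zero => exact fun x => by rw [add_zero]
    | add p q _ _ hp hq => exact hp.add_period hq
    | neg p _ hp => exact hp.neg
  refine hf.ext_on (dense_addSubgroupClosure_pair_iff.2 hab) continuous_const fun p hp => ?_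
  simpa using hper p hp 0

section HorizontalStrip

def horizontalStrip (η : ℝ) : Set ℂ := {z | |z.im| < η}

variable {η : ℝ}

@[simp]
theorem mem_horizontalStrip {z : ℂ} : z ∈ horizontalStrip η ↔ |z.im| < η := Iff.rfl

theorem isPreconnected_horizontalStrip (η : ℝ) : IsPreconnected (horizontalStrip η) := by
  have : horizontalStrip η = Complex.imLm ⁻¹' Ioo (-η) η := by
    ext z
    simp [abs_lt]
  rw [this]
  exact ((convex_Ioo _ _).linear_preimage _).isPreconnected

theorem add_ofReal_mem_horizontalStrip {z : ℂ} (hz : z ∈ horizontalStrip η) (t : ℝ) :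
    z + t ∈ horizontalStrip η := by
  simpa using hz

theorem ofReal_mem_horizontalStrip (hη : 0 < η) (x : ℝ) : (x : ℂ) ∈ horizontalStrip η := by
  simpa using hη

variable {E : Type*} [NormedAddCommGroup E] [NormedSpace ℂ E] {f : ℂ → E}

theorem AnalyticOnNhd.comp_add_ofReal_horizontalStrip (hf : AnalyticOnNhd ℂ f (horizontalStrip η))
    (t : ℝ) : AnalyticOnNhd ℂ (fun z => f (z + t)) (horizontalStrip η) :=
  hf.comp (analyticOnNhd_id.add analyticOnNhd_const) fun _ hz => add_ofReal_mem_horizontalStrip hz t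

theorem AnalyticOnNhd.eqOn_horizontalStrip_of_ofReal (hf : AnalyticOnNhd ℂ f (horizontalStrip η))
    {c : E} (h : ∀ x : ℝ, f x = c) : EqOn f (fun _ => c) (horizontalStrip η) := by
  intro z hz
  have h0 : (0 : ℂ) ∈ horizontalStrip η := by simpa using (abs_nonneg _).trans_lt hz
  have hreal : Tendsto ((↑) : ℝ → ℂ) (𝓝[≠] 0) (𝓝[≠] 0) := by
    simpa using Complex.continuous_ofReal.continuousWithinAt.tendsto_nhdsWithin
      (x := (0 : ℝ)) fun x hx => by simpa using hx
  exact hf.eqOn_of_preconnected_of_frequently_eq analyticOnNhd_const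
    (isPreconnected_horizontalStrip η) h0 (hreal.frequently (Frequently.of_forall h)) hz

end HorizontalStrip

section Determinant

variable {n : Type*} [Fintype n] [DecidableEq n]

theorem analyticOnNhd_det {𝕜 E : Type*} [NontriviallyNormedField 𝕜] [NormedAddCommGroup E]
    [NormedSpace 𝕜 E] {X : E → Matrix n n 𝕜} {s : Set E}
    (h : ∀ i j, AnalyticOnNhd 𝕜 (fun z => X z i j) s) :
    AnalyticOnNhd 𝕜 (fun z => (X z).det) s := by
  simp_rw [det_apply]
  refine Finset.analyticOnNhd_fun_sum _ fun σ _ => ?_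
  simp_rw [Units.smul_def, zsmul_eq_mul]
  exact analyticOnNhd_const.mul (Finset.analyticOnNhd_fun_prod _ fun i _ => h _ _)

theorem Matrix.det_eq_det_of_mul_eq_mul {R : Type*} [CommRing R] [IsDomain R]
    {A X Y V : Matrix n n R} (h : A * X = Y * V) (hdet : A.det = V.det) (hV : V.det ≠ 0) :
    X.det = Y.det := by
  have := congrArg det h
  rw [det_mul, det_mul, hdet, mul_comm Y.det] at this
  exact mul_left_cancel₀ hV this

theorem Matrix.inv_mul_mul_eq_iff {R : Type*} [CommRing R] {P M Q N : Matrix n n R}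
    (hP : IsUnit P.det) : P⁻¹ * M * Q = N ↔ M * Q = P * N := by
  have := invertibleOfIsUnitDet P hP
  rw [Matrix.mul_assoc, inv_mul_eq_iff_eq_mul_of_invertible]

theorem Matrix.det_im_eq_zero {M : Matrix n n ℂ} (h : ∀ i j, (M i j).im = 0) : M.det.im = 0 := by
  have hM : M = (M.map Complex.re).map Complex.ofRealHom := by
    ext i j
    exact Complex.ext rfl (by simp [h i j])
  rw [hM, ← RingHom.mapMatrix_apply, ← RingHom.map_det]
  exact Complex.ofReal_im _

end Determinant

theorem Matrix.det_add_add_det_sub_fin_two {R : Type*} [CommRing R]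
    (X Y : Matrix (Fin 2) (Fin 2) R) : (X + Y).det + (X - Y).det = 2 * (X.det + Y.det) := by
  simp only [det_fin_two, add_apply, sub_apply]
  ring

theorem exists_sign_re_det_add_smul_pos {X Y : Matrix (Fin 2) (Fin 2) ℂ} (hX : X.det = 1)
    (hY : Y.det = 1) : ∃ ε : ℝ, (ε = 1 ∨ ε = -1) ∧ 0 < (X + (ε : ℂ) • Y).det.re := by
  have h := congrArg Complex.re (det_add_add_det_sub_fin_two X Y)
  by_contra! hneg
  have h1 := hneg 1 (Or.inl rfl)
  have h2 := hneg (-1) (Or.inr rfl)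
  simp only [Complex.ofReal_one, one_smul, Complex.ofReal_neg, neg_smul, ← sub_eq_add_neg] at h1 h2
  norm_num [hX, hY] at h
  linarith

section Cocycle

variable {n : Type*} {α η : ℝ} {A B : ℂ → Matrix n n ℂ} {V : Matrix n n ℂ}

theorem det_eq_det_zero_of_mem_horizontalStrip [Fintype n] [DecidableEq n] (hα : Irrational α)
    (hBan : ∀ i j, AnalyticOnNhd ℂ (fun z => B z i j) (horizontalStrip η))
    (hBper : ∀ z, B (z + 2) = B z) (hA : ∀ x : ℝ, (A x).det = V.det) (hV : V.det ≠ 0)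
    (hconj : ∀ x : ℝ, A x * B x = B (x + α) * V) :
    ∀ z ∈ horizontalStrip η, (B z).det = (B 0).det := by
  intro z hz
  have hη : 0 < η := (abs_nonneg _).trans_lt hz
  have han := analyticOnNhd_det hBan
  set ψ : ℝ → ℂ := fun x => (B x).det
  have hψ : Continuous ψ :=
    han.continuousOn.comp_continuous Complex.continuous_ofReal (ofReal_mem_horizontalStrip hη)
  have hψα : Periodic ψ α := fun x => by
    simpa [ψ] using (det_eq_det_of_mul_eq_mul (hconj x) (hA x) hV).symm
  have hψ2 : Periodic ψ 2 := fun x => by simpa [ψ] using congrArg det (hBper x)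
  have hconst := hψα.eq_const_of_irrational_div hψ2 (hα.div_natCast two_ne_zero) hψ
  refine han.eqOn_horizontalStrip_of_ofReal (fun x => ?_) hz
  simpa [ψ] using congrFun hconst x

variable (B) in
def shiftSum (ε : ℝ) (z : ℂ) : Matrix n n ℂ := B z + (ε : ℂ) • B (z + 1)

theorem analyticOnNhd_shiftSum_apply
    (hBan : ∀ i j, AnalyticOnNhd ℂ (fun z => B z i j) (horizontalStrip η)) (ε : ℝ) (i j : n) :
    AnalyticOnNhd ℂ (fun z => shiftSum B ε z i j) (horizontalStrip η) := by
  have hshift : AnalyticOnNhd ℂ (fun z => B (z + 1) i j) (horizontalStrip η) := by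
    simpa using (hBan i j).comp_add_ofReal_horizontalStrip 1
  exact (hBan i j).add (analyticOnNhd_const.mul hshift)

theorem shiftSum_im_eq_zero (hBreal : ∀ (x : ℝ) (i j : n), (B x i j).im = 0) (ε x : ℝ)
    (i j : n) : (shiftSum B ε x i j).im = 0 := by
  have h := hBreal (x + 1) i j
  push_cast at h
  simp [shiftSum, hBreal x i j, h]

theorem shiftSum_add_one (hBper : ∀ z, B (z + 2) = B z) {ε : ℝ} (hε : ε * ε = 1) (z : ℂ) :
    shiftSum B ε (z + 1) = (ε : ℂ) • shiftSum B ε z := by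
  have hε' : (ε : ℂ) * ε = 1 := by exact_mod_cast hε
  rw [shiftSum, shiftSum, add_assoc, one_add_one_eq_two, hBper, smul_add, smul_smul, hε', one_smul,
    add_comm]

theorem shiftSum_add_two (hBper : ∀ z, B (z + 2) = B z) (ε : ℝ) (z : ℂ) :
    shiftSum B ε (z + 2) = shiftSum B ε z := by
  rw [shiftSum, shiftSum, hBper, add_right_comm, hBper]

theorem shiftSum_conj [Fintype n] (hAper : ∀ z, A (z + 1) = A z)
    (hconj : ∀ x : ℝ, A x * B x = B (x + α) * V) (ε x : ℝ) :
    A x * shiftSum B ε x = shiftSum B ε (x + α) * V := by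
  have h1 := hconj (x + 1)
  push_cast at h1
  rw [hAper, add_right_comm] at h1
  rw [shiftSum, shiftSum, Matrix.mul_add, Matrix.mul_smul, hconj, h1, Matrix.add_mul,
    Matrix.smul_mul]

end Cocycle

theorem exists_conj_const_of_re_det_shiftSum_pos {α η : ℝ} {A B : ℂ → Matrix (Fin 2) (Fin 2) ℂ}
    {V : Matrix (Fin 2) (Fin 2) ℂ} (hα : Irrational α) (hη : 0 < η)
    (hAper : ∀ z, A (z + 1) = A z) (hA : ∀ x : ℝ, (A x).det = V.det) (hV : V.det ≠ 0)
    (hBan : ∀ i j, AnalyticOnNhd ℂ (fun z => B z i j) (horizontalStrip η))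
    (hBper : ∀ z, B (z + 2) = B z) (hBreal : ∀ (x : ℝ) (i j : Fin 2), (B x i j).im = 0)
    (hconj : ∀ x : ℝ, A x * B x = B (x + α) * V) {ε : ℝ} (hε : ε = 1 ∨ ε = -1)
    (hpos : 0 < (shiftSum B ε 0).det.re) :
    ∃ B' : ℂ → Matrix (Fin 2) (Fin 2) ℂ,
      (∀ i j, AnalyticOnNhd ℂ (fun z => B' z i j) (horizontalStrip η)) ∧
      (∀ (x : ℝ) (i j : Fin 2), (B' x i j).im = 0) ∧
      (∀ z ∈ horizontalStrip η, (B' z).det = 1) ∧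
      (∀ z : ℂ, B' (z + 1) = B' z ∨ B' (z + 1) = -B' z) ∧
      ∃ V' : Matrix (Fin 2) (Fin 2) ℂ,
        ∀ x : ℝ, (B' ((x : ℂ) + (α : ℂ)))⁻¹ * A x * B' x = V' := by
  obtain ⟨r, hr⟩ : ∃ r : ℝ, r ^ 2 * (shiftSum B ε 0).det.re = 1 :=
    ⟨(√(shiftSum B ε 0).det.re)⁻¹, by rw [inv_pow, Real.sq_sqrt hpos.le, inv_mul_cancel₀ hpos.ne']⟩
  have hc : (shiftSum B ε 0).det = ((shiftSum B ε 0).det.re : ℂ) :=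
    Complex.ext rfl (by simpa using det_im_eq_zero (shiftSum_im_eq_zero hBreal ε 0))
  have hdet : ∀ z ∈ horizontalStrip η, ((r : ℂ) • shiftSum B ε z).det = 1 := fun z hz => by
    rw [det_smul, Fintype.card_fin, det_eq_det_zero_of_mem_horizontalStrip hα
      (analyticOnNhd_shiftSum_apply hBan ε) (shiftSum_add_two hBper ε) hA hV
      (shiftSum_conj hAper hconj ε) z hz, hc, ← Complex.ofReal_pow, ← Complex.ofReal_mul, hr,
      Complex.ofReal_one]
  refine ⟨fun z => (r : ℂ) • shiftSum B ε z,
    fun i j => analyticOnNhd_const.mul (analyticOnNhd_shiftSum_apply hBan ε i j),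
    fun x i j => by simp [shiftSum_im_eq_zero hBreal ε x i j], hdet, fun z => ?_, V, fun x => ?_⟩
  · rcases hε with rfl | rfl
    · left
      simp [shiftSum_add_one hBper (one_mul 1)]
    · right
      simp [shiftSum_add_one hBper (by norm_num : (-1 : ℝ) * -1 = 1)]
  · have hunit : IsUnit ((r : ℂ) • shiftSum B ε (x + α)).det := by
      rw [hdet _ (add_ofReal_mem_horizontalStrip (ofReal_mem_horizontalStrip hη x) α)]
      exact isUnit_one
    rw [inv_mul_mul_eq_iff hunit, Matrix.mul_smul, shiftSum_conj hAper hconj ε x, Matrix.smul_mul]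

theorem stmt8_general (α η : ℝ) (hα : Irrational α) (hη : 0 < η)
    (A : ℂ → Matrix (Fin 2) (Fin 2) ℂ)
    (hAper : ∀ z : ℂ, A (z + 1) = A z)
    (hAdet : ∀ z ∈ {z : ℂ | |z.im| < η}, (A z).det = 1)
    (B : ℂ → Matrix (Fin 2) (Fin 2) ℂ)
    (hBan : ∀ i j, AnalyticOnNhd ℂ (fun z => B z i j) {z : ℂ | |z.im| < η})
    (hBper : ∀ z : ℂ, B (z + 2) = B z)
    (hBreal : ∀ (x : ℝ) (i j : Fin 2), (B x i j).im = 0)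
    (hBdet : ∀ z ∈ {z : ℂ | |z.im| < η}, (B z).det = 1)
    (hconst : ∃ V : Matrix (Fin 2) (Fin 2) ℂ,
      ∀ x : ℝ, (B ((x : ℂ) + (α : ℂ)))⁻¹ * A x * B x = V) :
    ∃ B' : ℂ → Matrix (Fin 2) (Fin 2) ℂ,
      (∀ i j, AnalyticOnNhd ℂ (fun z => B' z i j) {z : ℂ | |z.im| < η}) ∧
      (∀ (x : ℝ) (i j : Fin 2), (B' x i j).im = 0) ∧
      (∀ z ∈ {z : ℂ | |z.im| < η}, (B' z).det = 1) ∧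
      (∀ z : ℂ, B' (z + 1) = B' z ∨ B' (z + 1) = -B' z) ∧
      ∃ V' : Matrix (Fin 2) (Fin 2) ℂ,
        ∀ x : ℝ, (B' ((x : ℂ) + (α : ℂ)))⁻¹ * A x * B' x = V' := by
  obtain ⟨V, hV⟩ := hconst
  have hmem := ofReal_mem_horizontalStrip hη
  have hdetB : ∀ x : ℝ, (B x).det = 1 ∧ (B (x + α)).det = 1 := fun x =>
    ⟨hBdet _ (hmem x), hBdet _ (add_ofReal_mem_horizontalStrip (hmem x) α)⟩
  have hconj : ∀ x : ℝ, A x * B x = B (x + α) * V := fun x =>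
    (inv_mul_mul_eq_iff (by simp [(hdetB x).2])).1 (hV x)
  have hA : ∀ x : ℝ, (A x).det = V.det := fun x => by
    simpa [hdetB x] using congrArg det (hconj x)
  have hVdet : V.det ≠ 0 := by
    rw [← hA 0, hAdet _ (hmem 0)]
    exact one_ne_zero
  obtain ⟨ε, hε, hpos⟩ := exists_sign_re_det_add_smul_pos (hBdet 0 (by simpa using hη))
    (hBdet 1 (by simpa using hη))
  exact exists_conj_const_of_re_det_shiftSum_pos hα hη hAper hA hVdet hBan hBper hBreal hconj hε
    (by simpa [shiftSum] using hpos)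

/-- if an analytic SL(2,ℝ) cocycle A on ℝ/ℤ is conjugated to a constant by an
    analytic B : ℝ/2ℤ → SL(2,ℝ) on the strip |Im z| < η, then it is conjugated to a constant
    by an analytic B′ : ℝ/ℤ → PSL(2,ℝ) (i.e. B′(x+1) = ±B′(x)) on the same strip. -/
theorem stmt8 (α η : ℝ) (hα : Irrational α) (hη : 0 < η)
    (A : ℂ → Matrix (Fin 2) (Fin 2) ℂ)
    (hAan : ∀ i j, AnalyticOnNhd ℂ (fun z => A z i j) {z : ℂ | |z.im| < η})
    (hAper : ∀ z : ℂ, A (z + 1) = A z)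
    (hAreal : ∀ (x : ℝ) (i j : Fin 2), (A x i j).im = 0)
    (hAdet : ∀ z ∈ {z : ℂ | |z.im| < η}, (A z).det = 1)
    (B : ℂ → Matrix (Fin 2) (Fin 2) ℂ)
    (hBan : ∀ i j, AnalyticOnNhd ℂ (fun z => B z i j) {z : ℂ | |z.im| < η})
    (hBper : ∀ z : ℂ, B (z + 2) = B z)
    (hBreal : ∀ (x : ℝ) (i j : Fin 2), (B x i j).im = 0)
    (hBdet : ∀ z ∈ {z : ℂ | |z.im| < η}, (B z).det = 1)
    (hconst : ∃ V : Matrix (Fin 2) (Fin 2) ℂ,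
      ∀ x : ℝ, (B ((x : ℂ) + (α : ℂ)))⁻¹ * A x * B x = V) :
    ∃ B' : ℂ → Matrix (Fin 2) (Fin 2) ℂ,
      (∀ i j, AnalyticOnNhd ℂ (fun z => B' z i j) {z : ℂ | |z.im| < η}) ∧
      (∀ (x : ℝ) (i j : Fin 2), (B' x i j).im = 0) ∧
      (∀ z ∈ {z : ℂ | |z.im| < η}, (B' z).det = 1) ∧
      (∀ z : ℂ, B' (z + 1) = B' z ∨ B' (z + 1) = -B' z) ∧
      ∃ V' : Matrix (Fin 2) (Fin 2) ℂ,
        ∀ x : ℝ, (B' ((x : ℂ) + (α : ℂ)))⁻¹ * A x * B' x = V' :=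
  stmt8_general α η hα hη A hAper hAdet B hBan hBper hBreal hBdet hconst
end

section
/- Let α be irrational, λ ≠ 0, E ∈ ℝ, and let A(x) = S_{λ,E}(x) = [[E − 2λcos 2πx, −1],[1, 0]]. Then the cocycle (α, A) cannot be analytically reduced to ±I: there is no analytic B : ℝ/ℤ → PSL(2,ℝ) with B(x+α)^{-1}A(x)B(x) = I or = −I for all x. -/
/-!
If `B` reduced the cocycle to `σ I` with `σ = ±1`, then `A(x) B(x) = σ B(x + α)`, so the first row
`(u₁, u₂)` of `B` consists of two continuous solutions of the almost Mathieu equation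
`(σE - 2σλ cos 2πx) u(x) = u(x + α) + u(x - α)`, and `det B = 1` says that their Wronskian
`u₁(x) u₂(x - α) - u₂(x) u₁(x - α)` is identically `σ`.

Since `B(x + 1) = ±B(x)` with a sign that is constant by connectedness, the `uᵢ` live on `ℝ/2ℤ`
and are all periodic or all antiperiodic under `x ↦ x + 1`, so their Fourier coefficients
(in `e^{iπkx}`) are supported on one parity class of `k`. These coefficients satisfy the dual
recurrence `λ(û(k + 2) + û(k - 2)) = (E - 2 cos πkα) û(k)`, whose discrete Wronskian is invariant
under `k ↦ k + 2` and tends to `0` by Riemann–Lebesgue, hence vanishes. So the coefficient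
sequences are proportional, `u₁` and `u₂` are linearly dependent, and their Wronskian is `0 ≠ σ`.
-/

open Filter Topology AddCircle MeasureTheory Real

def discreteWronskian {K : Type*} [Mul K] [Sub K] (c d : ℤ → K) (k : ℤ) : K :=
  c k * d (k + 2) - c (k + 2) * d k

section DualRecurrence

variable {K : Type*} [Field K] {l : K} {V : ℤ → K} {c d : ℤ → K}

theorem discreteWronskian_add_two (hl : l ≠ 0)
    (hc : ∀ k, l * (c (k + 2) + c (k - 2)) = V k * c k)
    (hd : ∀ k, l * (d (k + 2) + d (k - 2)) = V k * d k) (k : ℤ) :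
    discreteWronskian c d (k + 2) = discreteWronskian c d k := by
  have hc' := hc (k + 2)
  have hd' := hd (k + 2)
  rw [add_sub_cancel_right] at hc' hd'
  refine mul_left_cancel₀ hl ?_
  unfold discreteWronskian
  linear_combination c (k + 2) * hd' - d (k + 2) * hc'

theorem discreteWronskian_eq_zero [TopologicalSpace K] [IsTopologicalRing K] [T2Space K]
    (hl : l ≠ 0) (hc : ∀ k, l * (c (k + 2) + c (k - 2)) = V k * c k)
    (hd : ∀ k, l * (d (k + 2) + d (k - 2)) = V k * d k)
    (hc₀ : Tendsto c cofinite (𝓝 0)) (hd₀ : Tendsto d cofinite (𝓝 0)) (k : ℤ) :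
    discreteWronskian c d k = 0 := by
  have hshift : Tendsto (· + 2 : ℤ → ℤ) cofinite cofinite :=
    (add_left_injective 2).tendsto_cofinite
  have hW : Tendsto (discreteWronskian c d) cofinite (𝓝 0) := by
    have := (hc₀.mul (hd₀.comp hshift)).sub ((hc₀.comp hshift).mul hd₀)
    rwa [mul_zero, sub_zero] at this
  have hconst (n : ℕ) : discreteWronskian c d (k + 2 * n) = discreteWronskian c d k := by
    induction n with
    | zero => simp
    | succ n ih =>
      rw [Nat.cast_succ, mul_add_one, ← add_assoc, discreteWronskian_add_two hl hc hd, ih]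
  have hprog : Tendsto (fun n : ℕ => k + 2 * (n : ℤ)) atTop cofinite := by
    rw [← Nat.cofinite_eq_atTop]
    exact Function.Injective.tendsto_cofinite fun m n h => by simpa using h
  exact tendsto_nhds_unique (tendsto_const_nhds.congr fun n => (hconst n).symm) (hW.comp hprog)

theorem eq_zero_of_eq_zero_of_eq_zero_add_two (hl : l ≠ 0)
    (hc : ∀ k, l * (c (k + 2) + c (k - 2)) = V k * c k) {k₀ : ℤ}
    (h₀ : c k₀ = 0) (h₂ : c (k₀ + 2) = 0) (n : ℤ) : c (k₀ + 2 * n) = 0 := by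
  suffices c (k₀ + 2 * n) = 0 ∧ c (k₀ + 2 * n + 2) = 0 from this.1
  induction n using Int.induction_on with
  | zero => simpa using ⟨h₀, h₂⟩
  | succ n ih =>
    have h := hc (k₀ + 2 * n + 2)
    rw [add_sub_cancel_right, ih.1, ih.2] at h
    refine ⟨by rw [mul_add_one, ← add_assoc]; exact ih.2, ?_⟩
    rw [mul_add_one, ← add_assoc]
    simpa [hl] using h
  | pred n ih =>
    have h := hc (k₀ + 2 * -n)
    rw [ih.1, ih.2] at h
    refine ⟨?_, by rw [mul_sub_one, ← add_sub_assoc, sub_add_cancel]; exact ih.1⟩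
    rw [mul_sub_one, ← add_sub_assoc]
    simpa [hl] using h

theorem eq_mul_of_discreteWronskian_eq_zero (hl : l ≠ 0)
    (hc : ∀ k, l * (c (k + 2) + c (k - 2)) = V k * c k)
    (hd : ∀ k, l * (d (k + 2) + d (k - 2)) = V k * d k)
    (hW : ∀ k, discreteWronskian c d k = 0) {k₀ : ℤ} (hk₀ : c k₀ ≠ 0) (n : ℤ) :
    d (k₀ + 2 * n) = d k₀ / c k₀ * c (k₀ + 2 * n) := by
  set μ := d k₀ / c k₀
  have he (k : ℤ) : l * ((d - μ • c) (k + 2) + (d - μ • c) (k - 2)) = V k * (d - μ • c) k := by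
    simp only [Pi.sub_apply, Pi.smul_apply, smul_eq_mul]
    linear_combination hd k - μ * hc k
  have h₀ : (d - μ • c) k₀ = 0 := by
    simp [μ, hk₀]
  have h₂ : (d - μ • c) (k₀ + 2) = 0 := by
    have := hW k₀
    unfold discreteWronskian at this
    rw [Pi.sub_apply, Pi.smul_apply, smul_eq_mul, div_mul_eq_mul_div, sub_eq_zero,
      eq_div_iff hk₀]
    linear_combination this
  exact sub_eq_zero.mp (eq_zero_of_eq_zero_of_eq_zero_add_two hl he h₀ h₂ n)

end DualRecurrence

section FourierCoeff

theorem fourier_apply_add {T : ℝ} (n : ℤ) (x y : AddCircle T) :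
    fourier n (x + y) = fourier n x * fourier n y := by
  simp only [fourier_apply, smul_add, toCircle_add, Circle.coe_mul]

variable {T : ℝ} [Fact (0 < T)]

theorem fourier_coe_half_period (n : ℤ) : fourier n ((T / 2 : ℝ) : AddCircle T) = (-1) ^ n := by
  rw [fourier_coe_apply, ← Complex.exp_pi_mul_I, ← Complex.exp_int_mul]
  congr 1
  have : (T : ℂ) ≠ 0 := by exact_mod_cast (Fact.out : 0 < T).ne'
  push_cast
  field_simp

theorem fourierCoeff_comp_add (f : AddCircle T → ℂ) (a : AddCircle T) (n : ℤ) :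
    fourierCoeff (fun x => f (x + a)) n = fourier n a * fourierCoeff f n := by
  have hshift (x : AddCircle T) : fourier (-n) x = fourier n a * fourier (-n) (x + a) := by
    rw [fourier_apply_add, mul_left_comm, ← fourier_add, add_neg_cancel, fourier_zero, mul_one]
  calc fourierCoeff (fun x => f (x + a)) n
      = ∫ x, fourier n a * (fourier (-n) (x + a) * f (x + a)) ∂haarAddCircle := by
        unfold fourierCoeff
        congr 1 with x
        rw [smul_eq_mul, hshift, mul_assoc]
    _ = fourier n a * fourierCoeff f n := by
        rw [integral_const_mul, integral_add_right_eq_self (fun x => fourier (-n) x * f x) a]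
        rfl

theorem fourierCoeff_fourier_mul (f : AddCircle T → ℂ) (m n : ℤ) :
    fourierCoeff (fun x => fourier m x * f x) n = fourierCoeff f (n - m) := by
  unfold fourierCoeff
  congr 1 with x
  rw [smul_eq_mul, smul_eq_mul, ← mul_assoc, ← fourier_add, neg_sub, sub_eq_neg_add]

theorem fourierCoeff_add_of_continuous {f g : AddCircle T → ℂ} (hf : Continuous f)
    (hg : Continuous g) (n : ℤ) :
    fourierCoeff (fun x => f x + g x) n = fourierCoeff f n + fourierCoeff g n :=
  congrFun (fourierCoeff.add (hf.integrable_of_hasCompactSupport (.of_compactSpace _))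
    (hg.integrable_of_hasCompactSupport (.of_compactSpace _))) n

theorem tendsto_fourierCoeff_cofinite (f : Lp ℂ 2 (haarAddCircle (T := T))) :
    Tendsto (fourierCoeff f) cofinite (𝓝 0) := by
  have hsq := (hasSum_sq_fourierCoeff f).summable.tendsto_cofinite_zero.sqrt
  rw [Real.sqrt_zero] at hsq
  rw [tendsto_zero_iff_norm_tendsto_zero]
  exact hsq.congr fun n => Real.sqrt_sq (norm_nonneg _)

theorem ContinuousMap.eq_zero_of_fourierCoeff_eq_zero (f : C(AddCircle T, ℂ))
    (h : ∀ n, fourierCoeff f n = 0) : f = 0 := by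
  apply ContinuousMap.toLp_injective (p := 2) (𝕜 := ℂ) haarAddCircle
  rw [map_zero]
  apply fourierBasis.repr.injective
  ext n
  rw [fourierBasis_repr, fourierCoeff_toLp, h n, map_zero]
  rfl

theorem fourierCoeff_eq_zero_of_comp_add_half_period {u : AddCircle T → ℂ} {ε : ℂ}
    (hu : ∀ x, u (x + ↑(T / 2)) = ε * u x) {n : ℤ} (hn : (-1) ^ n ≠ ε) :
    fourierCoeff u n = 0 := by
  have h := congrArg (fourierCoeff · n) (funext hu)
  simp only [fourierCoeff_comp_add, fourier_coe_half_period, fourierCoeff.const_mul] at h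
  exact (mul_eq_mul_right_iff.mp h).resolve_left hn

end FourierCoeff

theorem neg_one_zpow_ne_of_odd_sub {n k : ℤ} (h : Odd (n - k)) : (-1 : ℂ) ^ n ≠ (-1) ^ k := by
  rw [← sub_add_cancel n k, zpow_add₀ (by norm_num), h.neg_one_zpow, neg_one_mul, ne_eq,
    neg_eq_iff_eq_neg, self_eq_neg]
  exact zpow_ne_zero _ (by norm_num)

section AlmostMathieuDual

variable {T : ℝ} [Fact (0 < T)] {a : AddCircle T} {E l : ℂ}

/-- As `fourier n a + fourier n (-a) = 2 cos (2πna/T)`, this is the Aubry dual equation. -/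
theorem fourierCoeff_almostMathieu {u : C(AddCircle T, ℂ)}
    (hu : ∀ x, (E - l * (fourier 2 x + fourier (-2) x)) * u x = u (x + a) + u (x - a)) (n : ℤ) :
    l * (fourierCoeff u (n + 2) + fourierCoeff u (n - 2)) =
      (E - (fourier n a + fourier n (-a))) * fourierCoeff u n := by
  have hmul (m : ℤ) : Continuous fun x => l * (fourier m x * u x) := by fun_prop
  have hshift (b : AddCircle T) : Continuous fun x => u (x + b) := by fun_prop
  have h := congrArg (fourierCoeff · n) (funext fun x =>
    show E * u x = u (x + a) + u (x + -a) + l * (fourier 2 x * u x) + l * (fourier (-2) x * u x)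
    by rw [← sub_eq_add_neg]; linear_combination hu x)
  rw [fourierCoeff.const_mul, fourierCoeff_add_of_continuous (by fun_prop) (hmul _),
    fourierCoeff_add_of_continuous (by fun_prop) (hmul _),
    fourierCoeff_add_of_continuous (hshift _) (hshift _), fourierCoeff_comp_add,
    fourierCoeff_comp_add, fourierCoeff.const_mul, fourierCoeff.const_mul,
    fourierCoeff_fourier_mul, fourierCoeff_fourier_mul, sub_neg_eq_add] at h
  linear_combination -h

theorem ContinuousMap.eq_zero_or_eq_smul_of_almostMathieu (hl : l ≠ 0) {u v : C(AddCircle T, ℂ)}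
    (hu : ∀ x, (E - l * (fourier 2 x + fourier (-2) x)) * u x = u (x + a) + u (x - a))
    (hv : ∀ x, (E - l * (fourier 2 x + fourier (-2) x)) * v x = v (x + a) + v (x - a))
    {ε : ℂ} (hεu : ∀ x, u (x + ↑(T / 2)) = ε * u x) (hεv : ∀ x, v (x + ↑(T / 2)) = ε * v x) :
    u = 0 ∨ ∃ μ : ℂ, v = μ • u := by
  by_cases hû : ∀ n, fourierCoeff u n = 0
  · exact .inl (u.eq_zero_of_fourierCoeff_eq_zero hû)
  push Not at hû
  obtain ⟨k₀, hk₀⟩ := hû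
  set μ := fourierCoeff v k₀ / fourierCoeff u k₀
  have hε : (-1) ^ k₀ = ε := by
    by_contra h
    exact hk₀ (fourierCoeff_eq_zero_of_comp_add_half_period hεu h)
  have hW := discreteWronskian_eq_zero hl (fourierCoeff_almostMathieu hu)
    (fourierCoeff_almostMathieu hv)
    (funext (fourierCoeff_toLp u) ▸ tendsto_fourierCoeff_cofinite (u.toLp 2 _ ℂ))
    (funext (fourierCoeff_toLp v) ▸ tendsto_fourierCoeff_cofinite (v.toLp 2 _ ℂ))
  have hcoeff (n : ℤ) : fourierCoeff v n = μ * fourierCoeff u n := by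
    rcases Int.even_or_odd (n - k₀) with ⟨m, hm⟩ | hodd
    · obtain rfl : n = k₀ + 2 * m := by omega
      exact eq_mul_of_discreteWronskian_eq_zero hl (fourierCoeff_almostMathieu hu)
        (fourierCoeff_almostMathieu hv) hW hk₀ m
    · -- the recurrence never links `n` to `k₀`; instead both coefficients vanish by symmetry
      have hn : (-1) ^ n ≠ ε := hε ▸ neg_one_zpow_ne_of_odd_sub hodd
      rw [fourierCoeff_eq_zero_of_comp_add_half_period hεv hn,
        fourierCoeff_eq_zero_of_comp_add_half_period hεu hn, mul_zero]
  refine .inr ⟨μ, sub_eq_zero.mp (ContinuousMap.eq_zero_of_fourierCoeff_eq_zero _ fun n => ?_)⟩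
  have hsub : ⇑(v - μ • u) = fun x => v x + -μ * u x := by
    ext x
    simp [sub_eq_add_neg]
  rw [hsub, fourierCoeff_add_of_continuous (by fun_prop) (by fun_prop), fourierCoeff.const_mul,
    hcoeff, neg_mul, add_neg_cancel]

end AlmostMathieuDual

theorem forall_eq_or_forall_eq_neg {X G : Type*} [TopologicalSpace X] [PreconnectedSpace X]
    [AddCommGroup G] [Module ℝ G] [Module.IsTorsionFree ℝ G] [TopologicalSpace G]
    [ContinuousNeg G] [T2Space G] {f g : X → G} (hf : Continuous f) (hg : Continuous g)
    (hg₀ : ∀ x, g x ≠ 0) (h : ∀ x, f x = g x ∨ f x = -g x) :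
    (∀ x, f x = g x) ∨ ∀ x, f x = -g x := by
  have hcompl : {x | f x = g x}ᶜ = {x | f x = -g x} := by
    ext x
    refine ⟨(h x).resolve_left, fun hneg heq => hg₀ x ?_⟩
    have h2 : (2 : ℝ) • g x = 0 := by
      rw [two_smul, ← neg_eq_iff_add_eq_zero]
      exact (heq.symm.trans hneg).symm
    simpa using h2
  have hclopen : IsClopen {x | f x = g x} :=
    ⟨isClosed_eq hf hg, isClosed_compl_iff.mp (hcompl ▸ isClosed_eq hf hg.neg)⟩
  rcases isClopen_iff.mp hclopen with hempty | huniv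
  · exact .inr fun x => (h x).resolve_left (Set.eq_empty_iff_forall_notMem.mp hempty x)
  · exact .inl fun x => Set.eq_univ_iff_forall.mp huniv x

theorem Continuous.exists_addCircle_lift {T : ℝ} {Y : Type*} [TopologicalSpace Y] {f : ℝ → Y}
    (hf : Continuous f) (hp : Function.Periodic f T) :
    ∃ F : C(AddCircle T, Y), ∀ x : ℝ, F x = f x :=
  ⟨⟨hp.lift, continuous_coinduced_dom.mpr hf⟩, fun _ => rfl⟩

theorem exists_addCircle_lift_of_add_one {f : ℝ → ℝ} (hf : Continuous f) {ε : ℝ}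
    (hε : ε * ε = 1) (hf₁ : ∀ x, f (x + 1) = ε * f x) :
    ∃ u : C(AddCircle (2 : ℝ), ℂ), (∀ x : ℝ, u x = f x) ∧
      ∀ y, u (y + ↑((2 : ℝ) / 2)) = ε * u y := by
  obtain ⟨u, hu⟩ := (Complex.continuous_ofReal.comp hf).exists_addCircle_lift fun x => by
    show (f (x + 2) : ℂ) = f x
    rw [show x + 2 = x + 1 + 1 by ring, hf₁, hf₁, ← mul_assoc, hε, one_mul]
  refine ⟨u, hu, fun y => ?_⟩
  induction y using QuotientAddGroup.induction_on with | H t => ?_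
  rw [div_self two_ne_zero, ← coe_add, hu, hu]
  show (f (t + 1) : ℂ) = ε * f t
  rw [hf₁, Complex.ofReal_mul]

theorem fourier_two_add_fourier_neg_two (x : ℝ) :
    fourier 2 (x : AddCircle (2 : ℝ)) + fourier (-2) (x : AddCircle (2 : ℝ)) =
      2 * Real.cos (2 * π * x) := by
  rw [fourier_coe_apply, fourier_coe_apply, Complex.ofReal_cos, Complex.cos]
  push_cast
  ring_nf

theorem almostMathieu_addCircle_of_real {a E l : ℝ} {f : ℝ → ℝ} {u : AddCircle (2 : ℝ) → ℂ}
    (hu : ∀ x : ℝ, u x = f x)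
    (hf : ∀ x, (E - 2 * l * Real.cos (2 * π * x)) * f x = f (x + a) + f (x - a))
    (x : AddCircle (2 : ℝ)) :
    ((E : ℂ) - l * (fourier 2 x + fourier (-2) x)) * u x = u (x + a) + u (x - a) := by
  induction x using QuotientAddGroup.induction_on with | H t => ?_
  rw [← coe_add, ← coe_sub, hu, hu, hu, fourier_two_add_fourier_neg_two]
  have h := congrArg ((↑) : ℝ → ℂ) (hf t)
  push_cast at h
  rw [Complex.ofReal_cos]
  push_cast
  linear_combination h

noncomputable def schrodingerMatrix (E lam x : ℝ) : Matrix (Fin 2) (Fin 2) ℝ :=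
  !![E - 2 * lam * Real.cos (2 * π * x), -1; 1, 0]

section Schrodinger

variable {α E lam σ : ℝ} {B : ℝ → Matrix (Fin 2) (Fin 2) ℝ}

theorem schrodingerMatrix_mul_eq_smul (hdet : ∀ x, (B x).det = 1)
    (hconj : ∀ x, (B (x + α))⁻¹ * schrodingerMatrix E lam x * B x = σ • 1) (x : ℝ) :
    schrodingerMatrix E lam x * B x = σ • B (x + α) := by
  have hunit : IsUnit (B (x + α)).det := by rw [hdet]; exact isUnit_one
  calc schrodingerMatrix E lam x * B x
      = B (x + α) * ((B (x + α))⁻¹ * schrodingerMatrix E lam x * B x) := by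
        rw [← Matrix.mul_assoc, ← Matrix.mul_assoc, Matrix.mul_nonsing_inv _ hunit, Matrix.one_mul]
    _ = σ • B (x + α) := by rw [hconj, Matrix.mul_smul, Matrix.mul_one]

theorem row_one_eq_of_schrodingerMatrix_mul (hσ : σ * σ = 1)
    (hAB : ∀ x, schrodingerMatrix E lam x * B x = σ • B (x + α)) (x : ℝ) (j : Fin 2) :
    B x 1 j = σ * B (x - α) 0 j := by
  have h := congrFun (congrFun (hAB (x - α)) 1) j
  simp [schrodingerMatrix, Matrix.mul_apply, Fin.sum_univ_two] at h
  linear_combination (-σ) * h - B x 1 j * hσ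

theorem row_zero_almostMathieu_of_schrodingerMatrix_mul (hσ : σ * σ = 1)
    (hAB : ∀ x, schrodingerMatrix E lam x * B x = σ • B (x + α)) (j : Fin 2) (x : ℝ) :
    (σ * E - 2 * (σ * lam) * Real.cos (2 * π * x)) * B x 0 j =
      B (x + α) 0 j + B (x - α) 0 j := by
  have h := congrFun (congrFun (hAB x) 0) j
  simp [schrodingerMatrix, Matrix.mul_apply, Fin.sum_univ_two,
    row_one_eq_of_schrodingerMatrix_mul hσ hAB x j] at h
  linear_combination σ * h + (B (x + α) 0 j + B (x - α) 0 j) * hσ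

theorem row_zero_wronskian_of_schrodingerMatrix_mul (hσ : σ * σ = 1) (hdet : ∀ x, (B x).det = 1)
    (hAB : ∀ x, schrodingerMatrix E lam x * B x = σ • B (x + α)) (x : ℝ) :
    B x 0 0 * B (x - α) 0 1 - B x 0 1 * B (x - α) 0 0 = σ := by
  have h := hdet x
  rw [Matrix.det_fin_two, row_one_eq_of_schrodingerMatrix_mul hσ hAB x 0,
    row_one_eq_of_schrodingerMatrix_mul hσ hAB x 1] at h
  linear_combination σ * h - (B x 0 0 * B (x - α) 0 1 - B x 0 1 * B (x - α) 0 0) * hσ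

end Schrodinger

theorem stmt9_general (α : ℝ) (lam E : ℝ) (hlam : lam ≠ 0) :
    ¬ ∃ (B : ℝ → Matrix (Fin 2) (Fin 2) ℝ) (V : Matrix (Fin 2) (Fin 2) ℝ),
      (∀ i j, AnalyticOnNhd ℝ (fun x => B x i j) Set.univ) ∧
      (∀ x : ℝ, (B x).det = 1) ∧
      (∀ x : ℝ, B (x + 1) = B x ∨ B (x + 1) = -B x) ∧
      (V = 1 ∨ V = -1) ∧
      (∀ x : ℝ, (B (x + α))⁻¹ * !![E - 2 * lam * Real.cos (2 * Real.pi * x), -1; 1, 0] * B x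
        = V) := by
  rintro ⟨B, V, hB, hdet, hper, hV, hconj⟩
  obtain ⟨σ, hσ, rfl⟩ : ∃ σ : ℝ, σ * σ = 1 ∧ V = σ • 1 := by
    rcases hV with rfl | rfl
    exacts [⟨1, by norm_num, by simp⟩, ⟨-1, by norm_num, by simp⟩]
  have hAB := schrodingerMatrix_mul_eq_smul hdet hconj
  obtain ⟨ε, hε, hεB⟩ : ∃ ε : ℝ, ε * ε = 1 ∧ ∀ x, B (x + 1) = ε • B x := by
    have hcont : Continuous B := continuous_pi fun i => continuous_pi fun j => (hB i j).continuous
    have hB₀ (x : ℝ) : B x ≠ 0 := fun h => by simpa [h] using hdet x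
    rcases forall_eq_or_forall_eq_neg (hcont.comp (continuous_add_const 1)) hcont hB₀ hper
      with h | h
    exacts [⟨1, by norm_num, by simpa using h⟩, ⟨-1, by norm_num, by simpa using h⟩]
  choose u hu hhalf using fun j : Fin 2 =>
    exists_addCircle_lift_of_add_one (hB 0 j).continuous hε fun x => by simp [hεB]
  have : Fact ((0 : ℝ) < 2) := ⟨two_pos⟩
  have hσ₀ : σ ≠ 0 := left_ne_zero_of_mul_eq_one hσ
  have hdep := ContinuousMap.eq_zero_or_eq_smul_of_almostMathieu
    (by exact_mod_cast mul_ne_zero hσ₀ hlam)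
    (almostMathieu_addCircle_of_real (hu 0)
      (row_zero_almostMathieu_of_schrodingerMatrix_mul hσ hAB 0))
    (almostMathieu_addCircle_of_real (hu 1)
      (row_zero_almostMathieu_of_schrodingerMatrix_mul hσ hAB 1)) (hhalf 0) (hhalf 1)
  have hW := congrArg ((↑) : ℝ → ℂ) (row_zero_wronskian_of_schrodingerMatrix_mul hσ hdet hAB 0)
  push_cast at hW
  rw [← hu, ← hu, ← hu, ← hu] at hW
  refine Complex.ofReal_ne_zero.mpr hσ₀ (hW.symm.trans ?_)
  rcases hdep with h | ⟨μ, h⟩ <;>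
    simp only [h, ContinuousMap.zero_apply, ContinuousMap.smul_apply, smul_eq_mul] <;> ring

/-- the almost Mathieu cocycle S_{λ,E} cannot be analytically reduced to ±I
    by an analytic B : ℝ/ℤ → PSL(2,ℝ). -/
theorem stmt9 (α : ℝ) (hα : Irrational α) (lam E : ℝ) (hlam : lam ≠ 0) :
    ¬ ∃ (B : ℝ → Matrix (Fin 2) (Fin 2) ℝ) (V : Matrix (Fin 2) (Fin 2) ℝ),
      (∀ i j, AnalyticOnNhd ℝ (fun x => B x i j) Set.univ) ∧
      (∀ x : ℝ, (B x).det = 1) ∧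
      (∀ x : ℝ, B (x + 1) = B x ∨ B (x + 1) = -B x) ∧
      (V = 1 ∨ V = -1) ∧
      (∀ x : ℝ, (B (x + α))⁻¹ * !![E - 2 * lam * Real.cos (2 * Real.pi * x), -1; 1, 0] * B x
        = V) :=
  stmt9_general α lam E hlam
end

section
/- Let U : ℝ → ℂ² be analytic in the strip |Im z| < η, nowhere vanishing there, with U(x+1) = U(x), and suppose the 2×2 matrix with columns U(z) and Ū(z) has identically zero determinant (where Ū(z) = Σ conj(a_n)e^{2πinz} if U(z) = Σ a_n e^{2πinz}). Then there exist an analytic function ψ with |ψ(x)| = 1 for real x and a real analytic vector-valued function W (i.e., W(x) ∈ ℝ² for x ∈ ℝ), analytic in |Im z| < η with W(x+1) = ±W(x), such that U = ψW. -/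
/-!
On the real line `Ū = conj U`, so by the identity theorem `Ū z = conj (U (conj z))` on the strip;
hence `Ū` is nonvanishing and `1`-periodic there. The vanishing determinant gives `U = k Ū` with
`k` analytic, nonvanishing and periodic on the strip, and `|k| = 1` on `ℝ`. The strip is simply
connected, so `k = ψ ^ 2` with `ψ` analytic; then `|ψ| = 1` on `ℝ`, `ψ (z + 1) = ± ψ z`, and
`W = ψ⁻¹ U` is real on `ℝ` because there `conj W = conj ψ⁻¹ • conj U = ψ • ψ⁻² • U = W`.
-/

open Complex ComplexConjugate Filter Topology Set

theorem HasDerivAt.of_sq_eq {ψ k : ℂ → ℂ} {k' z : ℂ} (hk : HasDerivAt k k' z)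
    (hψ : ContinuousAt ψ z) (hψz : ψ z ≠ 0) (hψk : ∀ᶠ w in 𝓝 z, ψ w ^ 2 = k w) :
    HasDerivAt ψ (k' / (2 * ψ z)) z := by
  rw [hasDerivAt_iff_tendsto_slope] at hk ⊢
  have hsum : Tendsto (fun w ↦ ψ w + ψ z) (𝓝[≠] z) (𝓝 (2 * ψ z)) := by
    rw [two_mul]
    exact (hψ.tendsto.add tendsto_const_nhds).mono_left nhdsWithin_le_nhds
  have hsum0 : ∀ᶠ w in 𝓝[≠] z, ψ w + ψ z ≠ 0 :=
    hsum.eventually_ne (mul_ne_zero two_ne_zero hψz)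
  refine (hk.div hsum (mul_ne_zero two_ne_zero hψz)).congr' ?_
  filter_upwards [nhdsWithin_le_nhds hψk, hsum0, self_mem_nhdsWithin] with w hw h0 hwz
  have hzk : ψ z ^ 2 = k z := hψk.self_of_nhds
  have hwz' : w - z ≠ 0 := sub_ne_zero.mpr hwz
  simp only [Pi.div_apply, slope_def_field, ← hw, ← hzk]
  field_simp
  ring

theorem AnalyticOnNhd.exists_sq_eq {s : Set ℂ} (hs : IsOpen s) (hsc : IsSimplyConnected s)
    {k : ℂ → ℂ} (hk : AnalyticOnNhd ℂ k s) (hk0 : ∀ z ∈ s, k z ≠ 0) :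
    ∃ ψ : ℂ → ℂ, AnalyticOnNhd ℂ ψ s ∧ ∀ z ∈ s, ψ z ^ 2 = k z := by
  obtain ⟨ψ, hψc, hψk⟩ := exists_continuousOn_pow_eq hsc hs hk.continuousOn
    (by rintro ⟨z, hz, h⟩; exact hk0 z hz h) two_ne_zero
  refine ⟨ψ, DifferentiableOn.analyticOnNhd (fun z hz ↦ ?_) hs, fun z _ ↦ hψk z⟩
  have hψz : ψ z ≠ 0 := fun h ↦ hk0 z hz (by rw [← hψk, h, zero_pow two_ne_zero])
  have hψzc : ContinuousAt ψ z := (hψc z hz).continuousAt (hs.mem_nhds hz)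
  exact ((hk z hz).differentiableAt.hasDerivAt.of_sq_eq hψzc hψz
    (Eventually.of_forall hψk)).differentiableAt.differentiableWithinAt

theorem AnalyticOnNhd.star_comp_conj {F : Type*} [NormedAddCommGroup F] [NormedSpace ℂ F]
    [CompleteSpace F] [StarAddMonoid F] [StarModule ℂ F] [ContinuousStar F] {f : ℂ → F} {s : Set ℂ}
    (hf : AnalyticOnNhd ℂ f s) (hs : IsOpen s) :
    AnalyticOnNhd ℂ (star ∘ f ∘ conj) (conj ⁻¹' s) :=
  DifferentiableOn.analyticOnNhd (fun _ hz ↦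
    (differentiableAt_star_conj_iff.mpr (hf _ hz).differentiableAt).differentiableWithinAt)
    (hs.preimage continuous_conj)

theorem AnalyticOnNhd.eqOn_of_preconnected_of_eq_ofReal {F : Type*} [NormedAddCommGroup F]
    [NormedSpace ℂ F] [CompleteSpace F] {f g : ℂ → F} {s : Set ℂ}
    (hf : AnalyticOnNhd ℂ f s) (hg : AnalyticOnNhd ℂ g s) (hs : IsPreconnected s) {x₀ : ℝ}
    (hx₀ : (x₀ : ℂ) ∈ s) (hfg : ∀ x : ℝ, f x = g x) : EqOn f g s := by
  refine hf.eqOn_of_preconnected_of_frequently_eq hg hs hx₀ ?_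
  have : Tendsto ((↑) : ℝ → ℂ) (𝓝[≠] x₀) (𝓝[≠] (x₀ : ℂ)) :=
    continuous_ofReal.continuousWithinAt.tendsto_nhdsWithin fun _ _ ↦ by simp_all
  exact this.frequently (Frequently.of_forall hfg)

theorem exists_analyticOnNhd_eq_smul_of_det_eq_zero {s : Set ℂ} (hs : IsOpen s)
    {U V : ℂ → ℂ × ℂ} (hU : AnalyticOnNhd ℂ U s) (hV : AnalyticOnNhd ℂ V s)
    (hV0 : ∀ z ∈ s, V z ≠ 0) (hdet : ∀ z ∈ s, (U z).1 * (V z).2 - (U z).2 * (V z).1 = 0) :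
    ∃ k : ℂ → ℂ, AnalyticOnNhd ℂ k s ∧ ∀ z ∈ s, U z = k z • V z := by
  classical
  set k : ℂ → ℂ := fun z ↦ if (V z).1 = 0 then (U z).2 / (V z).2 else (U z).1 / (V z).1
  have hV2 : ∀ z ∈ s, (V z).1 = 0 → (V z).2 ≠ 0 := fun z hz h1 h2 ↦ hV0 z hz (Prod.ext h1 h2)
  have hk1 : ∀ z, (V z).1 ≠ 0 → k z = (U z).1 / (V z).1 := fun z h1 ↦ if_neg h1
  have hk2 : ∀ z ∈ s, (V z).2 ≠ 0 → k z = (U z).2 / (V z).2 := by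
    intro z hz h2
    by_cases h1 : (V z).1 = 0
    · exact if_pos h1
    · rw [hk1 z h1, div_eq_div_iff h1 h2]
      linear_combination hdet z hz
  refine ⟨k, fun z hz ↦ ?_, fun z hz ↦ ?_⟩
  · by_cases h1 : (V z).1 = 0
    · have h2 := hV2 z hz h1
      refine ((analyticAt_snd.comp (hU z hz)).div (analyticAt_snd.comp (hV z hz)) h2).congr ?_
      filter_upwards [(analyticAt_snd.comp (hV z hz)).continuousAt.eventually_ne h2,
        hs.mem_nhds hz] with w hw hws
      exact (hk2 w hws hw).symm
    · refine ((analyticAt_fst.comp (hU z hz)).div (analyticAt_fst.comp (hV z hz)) h1).congr ?_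
      filter_upwards [(analyticAt_fst.comp (hV z hz)).continuousAt.eventually_ne h1] with w hw
      exact (hk1 w hw).symm
  · have hdetz := hdet z hz
    by_cases h1 : (V z).1 = 0
    · have h2 := hV2 z hz h1
      rw [h1, mul_zero, sub_zero, mul_eq_zero, or_iff_left h2] at hdetz
      ext
      · simp [h1, hdetz]
      · simp [hk2 z hz h2, h2]
    · ext
      · simp [hk1 z h1, h1]
      · simp only [hk1 z h1, Prod.smul_snd, smul_eq_mul]
        field_simp
        linear_combination -hdetz

theorem star_inv_smul_eq_of_norm_eq_one {E : Type*} [AddCommGroup E] [Module ℂ E]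
    [StarAddMonoid E] [StarModule ℂ E] {p : ℂ} {u : E} (hp : ‖p‖ = 1) (hu : u = p ^ 2 • star u) :
    star (p⁻¹ • u) = p⁻¹ • u := by
  have hp0 : p ≠ 0 := norm_ne_zero_iff.mp (by rw [hp]; exact one_ne_zero)
  have hconj : conj p⁻¹ = p := by
    rw [map_inv₀]
    exact inv_eq_of_mul_eq_one_right (by rw [conj_mul', hp, ofReal_one, one_pow])
  calc star (p⁻¹ • u) = p • star u := by rw [star_smul, ← starRingEnd_apply, hconj]
    _ = p⁻¹ • p ^ 2 • star u := by rw [smul_smul]; congr 1; field_simp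
    _ = p⁻¹ • u := by rw [← hu]

theorem norm_eq_one_of_eq_smul_star {E : Type*} [NormedAddCommGroup E] [NormedSpace ℂ E]
    [StarAddMonoid E] [NormedStarGroup E] {c : ℂ} {u : E} (hu : u ≠ 0) (h : u = c • star u) :
    ‖c‖ = 1 := by
  have := congrArg norm h
  rw [norm_smul, norm_star] at this
  exact (mul_eq_right₀ (norm_ne_zero_iff.mpr hu)).mp this.symm

def strip (η : ℝ) : Set ℂ := {z | |z.im| < η}

@[simp] theorem mem_strip {η : ℝ} {z : ℂ} : z ∈ strip η ↔ |z.im| < η := Iff.rfl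

theorem isOpen_strip (η : ℝ) : IsOpen (strip η) :=
  isOpen_lt (by fun_prop) continuous_const

theorem convex_strip (η : ℝ) : Convex ℝ (strip η) := by
  have : strip η = imLm ⁻¹' Metric.ball 0 η := by
    ext z
    simp
  exact this ▸ (convex_ball 0 η).linear_preimage imLm

theorem isSimplyConnected_strip {η : ℝ} (hη : 0 < η) : IsSimplyConnected (strip η) :=
  have := (convex_strip η).contractibleSpace ⟨0, by simpa using hη⟩
  inferInstanceAs (SimplyConnectedSpace (strip η))

theorem ofReal_mem_strip {η : ℝ} (hη : 0 < η) (x : ℝ) : (x : ℂ) ∈ strip η := by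
  simpa using hη

theorem preimage_conj_strip (η : ℝ) : conj ⁻¹' strip η = strip η := by
  ext z; simp

theorem add_one_mem_strip_iff {η : ℝ} {z : ℂ} : z + 1 ∈ strip η ↔ z ∈ strip η := by
  simp

theorem eqOn_star_comp_conj_strip {F : Type*} [NormedAddCommGroup F] [NormedSpace ℂ F]
    [CompleteSpace F] [StarAddMonoid F] [StarModule ℂ F] [ContinuousStar F] {η : ℝ} (hη : 0 < η)
    {U V : ℂ → F} (hU : AnalyticOnNhd ℂ U (strip η)) (hV : AnalyticOnNhd ℂ V (strip η))
    (hUV : ∀ x : ℝ, V x = star (U x)) : EqOn V (star ∘ U ∘ conj) (strip η) := by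
  have hU' := hU.star_comp_conj (isOpen_strip η)
  rw [preimage_conj_strip] at hU'
  exact hV.eqOn_of_preconnected_of_eq_ofReal hU' (convex_strip η).isPreconnected
    (ofReal_mem_strip hη 0) fun x ↦ by simp [hUV]

theorem exists_unimodular_smul_of_eq_smul_star_strip {η : ℝ} (hη : 0 < η) {U : ℂ → ℂ × ℂ}
    {k : ℂ → ℂ} (hU : AnalyticOnNhd ℂ U (strip η)) (hUper : ∀ z, U (z + 1) = U z)
    (hU0 : ∀ x : ℝ, U x ≠ 0) (hk : AnalyticOnNhd ℂ k (strip η)) (hk0 : ∀ z ∈ strip η, k z ≠ 0)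
    (hkper : ∀ z ∈ strip η, k (z + 1) = k z) (hUk : ∀ x : ℝ, U x = k x • star (U x)) :
    ∃ (ψ : ℂ → ℂ) (W : ℂ → ℂ × ℂ), AnalyticOnNhd ℂ ψ (strip η) ∧ (∀ x : ℝ, ‖ψ x‖ = 1) ∧
      AnalyticOnNhd ℂ W (strip η) ∧ (∀ x : ℝ, star (W x) = W x) ∧
      (∀ z, W (z + 1) = W z ∨ W (z + 1) = -W z) ∧ ∀ z ∈ strip η, U z = ψ z • W z := by
  obtain ⟨ψ, hψ, hψk⟩ := hk.exists_sq_eq (isOpen_strip η) (isSimplyConnected_strip hη) hk0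
  have hψ0 : ∀ z ∈ strip η, ψ z ≠ 0 := fun z hz h ↦ hk0 z hz (by rw [← hψk z hz, h, sq, zero_mul])
  have hψnorm : ∀ x : ℝ, ‖ψ x‖ = 1 := fun x ↦ by
    rw [← pow_eq_one_iff_of_nonneg (norm_nonneg _) two_ne_zero, ← norm_pow,
      hψk x (ofReal_mem_strip hη x), norm_eq_one_of_eq_smul_star (hU0 x) (hUk x)]
  -- outside the strip `ψ` is arbitrary, so `W` is cut off there to keep it (anti)periodic
  set W : ℂ → ℂ × ℂ := (strip η).indicator fun z ↦ (ψ z)⁻¹ • U z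
  have hW : ∀ z ∈ strip η, W z = (ψ z)⁻¹ • U z := fun z hz ↦ indicator_of_mem hz _
  have hW0 : ∀ z ∉ strip η, W z = 0 := fun z hz ↦ indicator_of_notMem hz _
  refine ⟨ψ, W, hψ, hψnorm, ?_, fun x ↦ ?_, fun z ↦ ?_, fun z hz ↦ ?_⟩
  · refine AnalyticOnNhd.congr (isOpen_strip η) (fun z hz ↦ ?_) fun z hz ↦ (hW z hz).symm
    exact ((hψ z hz).inv (hψ0 z hz)).smul (hU z hz)
  · rw [hW x (ofReal_mem_strip hη x)]
    exact star_inv_smul_eq_of_norm_eq_one (hψnorm x) (hψk x (ofReal_mem_strip hη x) ▸ hUk x)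
  · by_cases hz : z ∈ strip η
    · have hz1 : z + 1 ∈ strip η := add_one_mem_strip_iff.mpr hz
      have hsq : ψ (z + 1) ^ 2 = ψ z ^ 2 := by rw [hψk _ hz1, hψk z hz, hkper z hz]
      rw [hW z hz, hW _ hz1, hUper]
      rcases sq_eq_sq_iff_eq_or_eq_neg.mp hsq with h | h
      · exact Or.inl (by rw [h])
      · exact Or.inr (by rw [h, inv_neg, neg_smul])
    · left
      rw [hW0 z hz, hW0 _ (mt add_one_mem_strip_iff.mp hz)]
  · rw [hW z hz, smul_inv_smul₀ (hψ0 z hz)]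

/-- if U : ℝ/ℤ → ℂ² is analytic and nonvanishing in the strip |Im z| < η and
    the matrix with columns U and Ū (the coefficient-conjugate reflection, i.e. the analytic
    continuation of x ↦ conj(U(x))) has identically zero determinant, then U = ψW with ψ
    unimodular on ℝ and W real analytic with W(x+1) = ±W(x). -/
theorem stmt19 (η : ℝ) (hη : 0 < η) (U Ubar : ℂ → ℂ × ℂ)
    (hUan : AnalyticOnNhd ℂ (fun z => (U z).1) {z : ℂ | |z.im| < η} ∧
            AnalyticOnNhd ℂ (fun z => (U z).2) {z : ℂ | |z.im| < η})
    (hUper : ∀ z : ℂ, U (z + 1) = U z)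
    (hUne : ∀ z ∈ {z : ℂ | |z.im| < η}, U z ≠ 0)
    (hUbaran : AnalyticOnNhd ℂ (fun z => (Ubar z).1) {z : ℂ | |z.im| < η} ∧
               AnalyticOnNhd ℂ (fun z => (Ubar z).2) {z : ℂ | |z.im| < η})
    (hUbar : ∀ x : ℝ, Ubar x = ((starRingEnd ℂ) (U x).1, (starRingEnd ℂ) (U x).2))
    (hdet : ∀ z ∈ {z : ℂ | |z.im| < η}, (U z).1 * (Ubar z).2 - (U z).2 * (Ubar z).1 = 0) :
    ∃ (ψ : ℂ → ℂ) (W : ℂ → ℂ × ℂ),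
      AnalyticOnNhd ℂ ψ {z : ℂ | |z.im| < η} ∧
      (∀ x : ℝ, ‖ψ x‖ = 1) ∧
      AnalyticOnNhd ℂ (fun z => (W z).1) {z : ℂ | |z.im| < η} ∧
      AnalyticOnNhd ℂ (fun z => (W z).2) {z : ℂ | |z.im| < η} ∧
      (∀ x : ℝ, ((W x).1).im = 0 ∧ ((W x).2).im = 0) ∧
      (∀ z : ℂ, W (z + 1) = W z ∨ W (z + 1) = -W z) ∧
      ∀ z ∈ {z : ℂ | |z.im| < η}, U z = (ψ z * (W z).1, ψ z * (W z).2) := by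
  have hU : AnalyticOnNhd ℂ U (strip η) := fun z hz ↦ (hUan.1 z hz).prod (hUan.2 z hz)
  have hV : AnalyticOnNhd ℂ Ubar (strip η) := fun z hz ↦ (hUbaran.1 z hz).prod (hUbaran.2 z hz)
  have hrefl : EqOn Ubar (star ∘ U ∘ conj) (strip η) := eqOn_star_comp_conj_strip hη hU hV hUbar
  have hV0 : ∀ z ∈ strip η, Ubar z ≠ 0 := fun z hz h ↦
    hUne (conj z) (by simpa using hz) (by simpa [hrefl hz] using h)
  obtain ⟨k, hk, hUk⟩ := exists_analyticOnNhd_eq_smul_of_det_eq_zero (isOpen_strip η) hU hV hV0 hdet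
  have hk0 : ∀ z ∈ strip η, k z ≠ 0 := fun z hz h ↦ hUne z hz (by rw [hUk z hz, h, zero_smul])
  have hVper : ∀ z ∈ strip η, Ubar (z + 1) = Ubar z := fun z hz ↦ by
    simp [hrefl hz, hrefl (add_one_mem_strip_iff.mpr hz), hUper]
  have hkper : ∀ z ∈ strip η, k (z + 1) = k z := fun z hz ↦ by
    refine smul_left_injective ℂ (hV0 z hz) ?_
    simp only [← hVper z hz, ← hUk _ (add_one_mem_strip_iff.mpr hz), hUper, hUk z hz]
  obtain ⟨ψ, W, hψ, hψnorm, hW, hWreal, hWper, hUW⟩ :=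
    exists_unimodular_smul_of_eq_smul_star_strip hη hU hUper
      (fun x ↦ hUne x (ofReal_mem_strip hη x)) hk hk0 hkper
      (fun x ↦ (hUk x (ofReal_mem_strip hη x)).trans (congrArg _ (hUbar x)))
  refine ⟨ψ, W, hψ, hψnorm, fun z hz ↦ analyticAt_fst.comp (hW z hz),
    fun z hz ↦ analyticAt_snd.comp (hW z hz), fun x ↦ ?_, hWper, hUW⟩
  have := hWreal x
  exact ⟨conj_eq_iff_im.mp congr(($this).1), conj_eq_iff_im.mp congr(($this).2)⟩
end
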